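/- arXiv:1107.3392 — 7 statements merged into one kernel-verified Lean document; each statement's English description precedes it below -/
import Mathlib

section
/- Let π be a group and N a normal subgroup of π that is relatively perfect, i.e. ⁅π, N⁆ = N. Then the map on second group homology H₂(π; ℤ) → H₂(π/N; ℤ) (with trivial ℤ-coefficients) induced by the quotient homomorphism π → π/N is surjective. -/
/-! Second group homology with trivial `ℤ`-coefficients, defined via the
inhomogeneous bar complex `C_n(G) = ⊕_{G^n} ℤ` with the standard bar differential. -/

variable (G : Type*) [Group G]

/-- Degree-2 bar differential: `d(g, h) = [h] - [gh] + [g]`. -/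
noncomputable def barD2 : ((Fin 2 → G) →₀ ℤ) →ₗ[ℤ] ((Fin 1 → G) →₀ ℤ) :=
  Finsupp.lift _ ℤ _ fun p =>
    Finsupp.single ![p 1] 1 - Finsupp.single ![p 0 * p 1] 1 + Finsupp.single ![p 0] 1

/-- Degree-3 bar differential: `d(g, h, k) = [h, k] - [gh, k] + [g, hk] - [g, h]`. -/
noncomputable def barD3 : ((Fin 3 → G) →₀ ℤ) →ₗ[ℤ] ((Fin 2 → G) →₀ ℤ) :=
  Finsupp.lift _ ℤ _ fun p =>
    Finsupp.single ![p 1, p 2] 1 - Finsupp.single ![p 0 * p 1, p 2] 1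
      + Finsupp.single ![p 0, p 1 * p 2] 1 - Finsupp.single ![p 0, p 1] 1

/-- The second group homology `H₂(G; ℤ)` (trivial coefficients):
2-cycles modulo 3-boundaries in the bar complex. -/
noncomputable def H2 :=
  LinearMap.ker (barD2 G) ⧸
    (LinearMap.range (barD3 G)).comap (LinearMap.ker (barD2 G)).subtype

noncomputable instance : AddCommGroup (H2 G) := by delta H2; infer_instance
noncomputable instance : Module ℤ (H2 G) := by delta H2; infer_instance

variable {G} {H : Type*} [Group H]

/-- The chain map on bar `n`-chains induced by a group homomorphism. -/
noncomputable def barMap (f : G →* H) (n : ℕ) :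
    ((Fin n → G) →₀ ℤ) →ₗ[ℤ] ((Fin n → H) →₀ ℤ) :=
  Finsupp.lmapDomain ℤ ℤ fun p => f ∘ p

lemma barMap_single (f : G →* H) (n : ℕ) (p : Fin n → G) (b : ℤ) :
    barMap f n (Finsupp.single p b) = Finsupp.single (f ∘ p) b :=
  Finsupp.mapDomain_single

lemma barD2_single (p : Fin 2 → G) (b : ℤ) :
    barD2 G (Finsupp.single p b) =
      b • (Finsupp.single ![p 1] 1 - Finsupp.single ![p 0 * p 1] 1
        + Finsupp.single ![p 0] 1) := by
  simp [barD2, Finsupp.lift_apply, Finsupp.sum_single_index]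

lemma barD3_single (p : Fin 3 → G) (b : ℤ) :
    barD3 G (Finsupp.single p b) =
      b • (Finsupp.single ![p 1, p 2] 1 - Finsupp.single ![p 0 * p 1, p 2] 1
        + Finsupp.single ![p 0, p 1 * p 2] 1 - Finsupp.single ![p 0, p 1] 1) := by
  simp [barD3, Finsupp.lift_apply, Finsupp.sum_single_index]

lemma comp_vec1 (f : G →* H) (a : G) : f ∘ ![a] = ![f a] := by
  funext i
  fin_cases i
  simp

lemma comp_vec2 (f : G →* H) (a b : G) : f ∘ ![a, b] = ![f a, f b] := by
  funext i
  fin_cases i <;> simp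

lemma barMap_comm_d2 (f : G →* H) :
    (barD2 H).comp (barMap f 2) = (barMap f 1).comp (barD2 G) := by
  apply Finsupp.lhom_ext
  intro p b
  rw [LinearMap.comp_apply, LinearMap.comp_apply, barMap_single, barD2_single,
    barD2_single]
  simp only [map_smul, map_add, map_sub, barMap_single]
  simp [comp_vec1]

lemma barMap_comm_d3 (f : G →* H) :
    (barD3 H).comp (barMap f 3) = (barMap f 2).comp (barD3 G) := by
  apply Finsupp.lhom_ext
  intro p b
  rw [LinearMap.comp_apply, LinearMap.comp_apply, barMap_single, barD3_single,
    barD3_single]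
  simp only [map_smul, map_add, map_sub, barMap_single]
  simp [comp_vec2]

/-- The map `H₂(G; ℤ) → H₂(H; ℤ)` induced by a group homomorphism `f : G → H`,
by functoriality of group homology. -/
noncomputable def H2Map (f : G →* H) : H2 G →ₗ[ℤ] H2 H :=
  Submodule.mapQ _ _
    ((barMap f 2).restrict (p := LinearMap.ker (barD2 G))
      (q := LinearMap.ker (barD2 H)) (by
        intro x hx
        rw [LinearMap.mem_ker] at hx ⊢
        have := congrFun (congrArg DFunLike.coe (barMap_comm_d2 f)) x
        simp only [LinearMap.comp_apply] at this
        rw [this, hx, map_zero]))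
    (by
      intro x hx
      simp only [Submodule.mem_comap, Submodule.subtype_apply,
        LinearMap.mem_range, LinearMap.restrict_apply] at hx ⊢
      obtain ⟨y, hy⟩ := hx
      refine ⟨barMap f 3 y, ?_⟩
      have := congrFun (congrArg DFunLike.coe (barMap_comm_d3 f)) y
      simp only [LinearMap.comp_apply] at this
      rw [this, hy])

/-!
Choose a set-theoretic section `s` of `π → Q = π ⧸ N`. The naive lift `[a | b] ↦ [s a | s b]`
of bar 2-chains fails to commute with the boundary by the defect
`n(a, b) = s a * s b * (s (a * b))⁻¹ ∈ N`. Every `n ∈ ⁅π, N⁆` has a filling: a 2-chain `w` of `π`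
with `∂w = [n] - [1]` whose image in `Q` is a boundary. This is checked on commutators and is
stable under products and inverses. Since `N = ⁅π, N⁆`, correcting the naive lift by fillings of the
defects gives a lift of 2-cycles of `Q` to 2-cycles of `π` that is a right inverse of
`π → Q` on chains up to boundaries.
-/

noncomputable def bar1 {α : Type*} (a : α) : (Fin 1 → α) →₀ ℤ := Finsupp.single ![a] 1

noncomputable def bar2 {α : Type*} (a b : α) : (Fin 2 → α) →₀ ℤ := Finsupp.single ![a, b] 1

lemma single_eq_smul_bar2 {α : Type*} (p : Fin 2 → α) (b : ℤ) :
    Finsupp.single p b = b • bar2 (p 0) (p 1) := by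
  rw [bar2, Finsupp.smul_single, smul_eq_mul, mul_one]
  congr
  funext i
  fin_cases i <;> rfl

lemma barD2_bar2 (a b : G) : barD2 G (bar2 a b) = bar1 b - bar1 (a * b) + bar1 a := by
  simp [bar2, bar1, barD2_single]

lemma barD3_single_one (a b c : G) :
    barD3 G (Finsupp.single ![a, b, c] 1) =
      bar2 b c - bar2 (a * b) c + bar2 a (b * c) - bar2 a b := by
  simp [bar2, barD3_single]

lemma barMap_bar2 (f : G →* H) (a b : G) : barMap f 2 (bar2 a b) = bar2 (f a) (f b) := by
  rw [bar2, barMap_single, comp_vec2, bar2]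

lemma bar2_one_sub_bar2_one_one_mem_range (x : G) :
    bar2 1 x - bar2 1 1 ∈ LinearMap.range (barD3 G) :=
  ⟨Finsupp.single ![1, 1, x] 1, by rw [barD3_single_one]; simp only [one_mul]; abel⟩

noncomputable def fillingSubgroup (f : G →* H) : Subgroup G where
  carrier := {n | f n = 1 ∧ ∃ w, barD2 G w = bar1 n - bar1 1 ∧
    barMap f 2 w ∈ LinearMap.range (barD3 H)}
  one_mem' := ⟨map_one f, 0, by simp, by simp⟩
  mul_mem' := by
    rintro x y ⟨hx, wx, hdx, hfx⟩ ⟨hy, wy, hdy, hfy⟩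
    refine ⟨by rw [map_mul, hx, hy, one_mul], wx + wy - bar2 x y + bar2 1 1, ?_, ?_⟩
    · simp only [map_add, map_sub, hdx, hdy, barD2_bar2, one_mul]
      abel
    · simp only [map_add, map_sub, barMap_bar2, hx, hy, map_one, sub_add_cancel]
      exact add_mem hfx hfy
  inv_mem' := by
    rintro x ⟨hx, wx, hdx, hfx⟩
    refine ⟨by rw [map_inv, hx, inv_one], bar2 x x⁻¹ - wx - bar2 1 1, ?_, ?_⟩
    · simp only [map_sub, hdx, barD2_bar2, mul_inv_cancel, one_mul]
      abel
    · simp only [map_sub, barMap_bar2, map_inv, hx, inv_one, map_one, sub_sub_cancel_left]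
      exact neg_mem hfx

open scoped commutatorElement in
lemma commutator_mem_fillingSubgroup (f : G →* H) (g : G) {m : G} (hm : f m = 1) :
    ⁅g, m⁆ ∈ fillingSubgroup f := by
  refine ⟨by rw [map_commutatorElement, hm, commutatorElement_one_right], bar2 m m⁻¹
    - bar2 g (m * g⁻¹) - bar2 m g⁻¹ + bar2 g g⁻¹ + bar2 1 1 - bar2 (g * m * g⁻¹) m⁻¹, ?_, ?_⟩
  · simp only [map_add, map_sub, barD2_bar2, commutatorElement_def, mul_inv_cancel, mul_one,
      ← mul_assoc]
    abel
  · have hw : barMap f 2 (bar2 m m⁻¹ - bar2 g (m * g⁻¹) - bar2 m g⁻¹ + bar2 g g⁻¹ + bar2 1 1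
        - bar2 (g * m * g⁻¹) m⁻¹) = -(bar2 1 (f g)⁻¹ - bar2 1 1) := by
      simp only [map_add, map_sub, barMap_bar2, map_mul, map_inv, map_one, hm, inv_one, one_mul,
        mul_one, mul_inv_cancel]
      abel
    rw [hw]
    exact neg_mem (bar2_one_sub_bar2_one_one_mem_range _)

lemma commutator_ker_le_fillingSubgroup (f : G →* H) :
    ⁅(⊤ : Subgroup G), f.ker⁆ ≤ fillingSubgroup f :=
  Subgroup.commutator_le.mpr fun g _ _ hm => commutator_mem_fillingSubgroup f g hm

section Lift

variable (s : H → G) (w : H → H → (Fin 2 → G) →₀ ℤ)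

def sectionDefect (a b : H) : G := s a * s b * (s (a * b))⁻¹

noncomputable def liftChain : ((Fin 2 → H) →₀ ℤ) →ₗ[ℤ] ((Fin 2 → G) →₀ ℤ) :=
  Finsupp.lift _ ℤ _ fun p => bar2 (s (p 0)) (s (p 1))
    - bar2 (sectionDefect s (p 0) (p 1)) (s (p 0 * p 1)) + w (p 0) (p 1) + bar2 1 1

lemma liftChain_bar2 (a b : H) :
    liftChain s w (bar2 a b) =
      bar2 (s a) (s b) - bar2 (sectionDefect s a b) (s (a * b)) + w a b + bar2 1 1 := by
  simp [liftChain, bar2]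

variable {s w}

lemma map_sectionDefect {f : G →* H} (hs : Function.RightInverse s f) (a b : H) :
    f (sectionDefect s a b) = 1 := by
  simp only [sectionDefect, map_mul, map_inv, hs _, mul_inv_cancel]

lemma barD2_comp_liftChain
    (hw : ∀ a b, barD2 G (w a b) = bar1 (sectionDefect s a b) - bar1 1) :
    barD2 G ∘ₗ liftChain s w = Finsupp.lmapDomain ℤ ℤ (s ∘ ·) ∘ₗ barD2 H := by
  have hmap (a : H) : Finsupp.lmapDomain ℤ ℤ (s ∘ ·) (bar1 a) = bar1 (s a) := by
    rw [bar1, Finsupp.lmapDomain_apply, Finsupp.mapDomain_single, bar1]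
    congr
    funext i
    fin_cases i
    rfl
  refine Finsupp.lhom_ext fun p b => ?_
  simp only [LinearMap.comp_apply, single_eq_smul_bar2 p, map_smul, liftChain_bar2, map_add,
    map_sub, barD2_bar2, hw, hmap, sectionDefect, inv_mul_cancel_right, mul_one]
  module

lemma barMap_liftChain_sub_mem_range {f : G →* H} (hs : Function.RightInverse s f)
    (hw : ∀ a b, barMap f 2 (w a b) ∈ LinearMap.range (barD3 H)) (x : (Fin 2 → H) →₀ ℤ) :
    barMap f 2 (liftChain s w x) - x ∈ LinearMap.range (barD3 H) := by
  induction x using Finsupp.induction_linear with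
  | zero => simp
  | add x y hx hy => simpa only [map_add, add_sub_add_comm] using add_mem hx hy
  | single p b =>
    have hx : barMap f 2 (liftChain s w (b • bar2 (p 0) (p 1))) - b • bar2 (p 0) (p 1) =
        b • (barMap f 2 (w (p 0) (p 1)) - (bar2 1 (p 0 * p 1) - bar2 1 1)) := by
      simp only [map_smul, liftChain_bar2, map_add, map_sub, barMap_bar2, hs _,
        map_sectionDefect hs, map_one]
      module
    rw [single_eq_smul_bar2, hx]
    exact Submodule.smul_mem _ b (sub_mem (hw _ _) (bar2_one_sub_bar2_one_one_mem_range _))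

end Lift

lemma H2Map_surjective_of_lift_mod_boundaries (f : G →* H)
    (h : ∀ z ∈ LinearMap.ker (barD2 H), ∃ y ∈ LinearMap.ker (barD2 G),
      barMap f 2 y - z ∈ LinearMap.range (barD3 H)) :
    Function.Surjective (H2Map f) := by
  rintro ⟨⟨z, hz⟩⟩
  obtain ⟨y, hy, hyz⟩ := h z hz
  exact ⟨Submodule.Quotient.mk ⟨y, hy⟩, (Submodule.Quotient.eq _).mpr hyz⟩

theorem H2Map_surjective_of_ker_le_fillingSubgroup {f : G →* H} (hf : Function.Surjective f)
    (hker : f.ker ≤ fillingSubgroup f) : Function.Surjective (H2Map f) := by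
  obtain ⟨s, hs⟩ := hf.hasRightInverse
  choose w hdw hfw using fun a b => (hker (map_sectionDefect hs a b)).2
  refine H2Map_surjective_of_lift_mod_boundaries f fun z hz =>
    ⟨liftChain s w z, ?_, barMap_liftChain_sub_mem_range hs hfw z⟩
  rw [LinearMap.mem_ker, ← LinearMap.comp_apply, barD2_comp_liftChain hdw, LinearMap.comp_apply,
    LinearMap.mem_ker.mp hz, map_zero]

/-- If `N` is a relatively perfect normal subgroup of `π`,
i.e. `⁅π, N⁆ = N`, then the induced map `H₂(π; ℤ) → H₂(π/N; ℤ)` on second group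
homology (trivial `ℤ`-coefficients) is surjective. -/
theorem H2Map_surjective_of_relatively_perfect
    (π : Type*) [Group π] (N : Subgroup π) [N.Normal]
    (hN : ⁅(⊤ : Subgroup π), N⁆ = N) :
    Function.Surjective (H2Map (QuotientGroup.mk' N)) := by
  refine H2Map_surjective_of_ker_le_fillingSubgroup (QuotientGroup.mk'_surjective N) ?_
  simpa only [QuotientGroup.ker_mk', hN] using
    commutator_ker_le_fillingSubgroup (QuotientGroup.mk' N)
end

section
/- Let π be a group and N a normal subgroup of π. Suppose that the homomorphism Abelianization(π) → Abelianization(π/N) induced by the quotient map is injective, and that the induced map on second group homology H₂(π; ℤ) → H₂(π/N; ℤ) (trivial ℤ-coefficients) is surjective. Then N is relatively perfect in π, i.e. ⁅π, N⁆ = N. -/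
/-! Second group homology with trivial `ℤ`-coefficients, defined via the
inhomogeneous bar complex `C_n(G) = ⊕_{G^n} ℤ` with the standard bar differential. -/

variable (G : Type*) [Group G]

variable {G} {H : Type*} [Group H]

/-! Let `A = N/⁅π, N⁆`, an abelian group, fix a set-theoretic section `s` of `q : π → π/N`
and let `F(a, b) = s(a) s(b) s(ab)⁻¹ ∈ N` be its factor set. The `A`-valued cochains
`ν[g] = g s(q g)⁻¹` on `π` and `μ[a, b] = F(a, b)` on `π/N` satisfy `ν ∘ d = -μ ∘ q`. Hence `μ`
kills the images of the 2-cycles of `π` and, lifting along the surjection `q`, the boundaries of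
`π/N`; by surjectivity on `H₂` it kills every 2-cycle of `π/N`. If `n ∈ N`, injectivity on
abelianizations puts `n` in `[π, π]`, so `[n] = d c`; then `q c - [1, 1]` is a 2-cycle of `π/N`
whose `μ`-value is `-n` in `A`, so `n ∈ ⁅π, N⁆`. -/

section BarComplex

lemma barD2_comp_barD3 : (barD2 G).comp (barD3 G) = 0 := by
  refine Finsupp.lhom_ext fun p b => ?_
  rw [LinearMap.comp_apply, barD3_single, map_smul]
  simp only [map_add, map_sub, barD2_single, Matrix.cons_val_zero, Matrix.cons_val_one,
    LinearMap.zero_apply, smul_sub, smul_add, one_smul, mul_assoc]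
  abel

lemma barD2_barD3 (x : (Fin 3 → G) →₀ ℤ) : barD2 G (barD3 G x) = 0 :=
  LinearMap.congr_fun barD2_comp_barD3 x

lemma barD2_barMap (f : G →* H) (x : (Fin 2 → G) →₀ ℤ) :
    barD2 H (barMap f 2 x) = barMap f 1 (barD2 G x) :=
  LinearMap.congr_fun (barMap_comm_d2 f) x

lemma barD3_barMap (f : G →* H) (x : (Fin 3 → G) →₀ ℤ) :
    barD3 H (barMap f 3 x) = barMap f 2 (barD3 G x) :=
  LinearMap.congr_fun (barMap_comm_d3 f) x

lemma barMap_surjective {f : G →* H} (hf : Function.Surjective f) (n : ℕ) :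
    Function.Surjective (barMap f n) :=
  Finsupp.mapDomain_surjective hf.comp_left

lemma single_mul_sub_mem_range_barD2 (x y : G) :
    Finsupp.single ![x * y] (1 : ℤ) - (Finsupp.single ![x] 1 + Finsupp.single ![y] 1)
      ∈ LinearMap.range (barD2 G) := by
  refine ⟨-Finsupp.single ![x, y] 1, ?_⟩
  rw [map_neg, barD2_single]
  simp only [Matrix.cons_val_zero, Matrix.cons_val_one, one_smul]
  abel

/-- `g ↦ [g]` is a homomorphism to `C₁(G)/B₁(G)`, so it kills commutators. -/
lemma single_mem_range_barD2_of_mem_commutator {g : G} (hg : g ∈ commutator G) :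
    Finsupp.single ![g] (1 : ℤ) ∈ LinearMap.range (barD2 G) := by
  let φ : G →* Multiplicative (((Fin 1 → G) →₀ ℤ) ⧸ LinearMap.range (barD2 G)) :=
    MonoidHom.mk' (fun g => .ofAdd (Submodule.Quotient.mk (Finsupp.single ![g] 1)))
      fun x y => by
        rw [← ofAdd_add, ← Submodule.Quotient.mk_add]
        exact congrArg _ ((Submodule.Quotient.eq _).mpr (single_mul_sub_mem_range_barD2 x y))
  exact (Submodule.Quotient.mk_eq_zero _).mp (Abelianization.commutator_subset_ker φ hg)

lemma exists_barD3_eq_sub_of_H2Map_mk_eq {f : G →* H} {w : LinearMap.ker (barD2 G)}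
    {z : LinearMap.ker (barD2 H)}
    (h : H2Map f (Submodule.Quotient.mk w) = Submodule.Quotient.mk z) :
    ∃ u, barD3 H u = barMap f 2 w - z := by
  rw [H2Map] at h
  exact Submodule.mem_comap.mp ((Submodule.Quotient.eq _).mp h)

end BarComplex

lemma Subgroup.le_commutator_of_injective_abelianizationMap {π : Type*} [Group π]
    (N : Subgroup π) [N.Normal]
    (h : Function.Injective (Abelianization.map (QuotientGroup.mk' N))) :
    N ≤ _root_.commutator π := by
  intro n hn
  rw [← Abelianization.ker_of, MonoidHom.mem_ker]
  refine h ?_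
  rw [Abelianization.map_of, map_one, QuotientGroup.mk'_apply,
    (QuotientGroup.eq_one_iff n).mpr hn, map_one]

namespace RelCommutator

open QuotientGroup
open scoped commutatorElement

variable {π : Type*} [Group π] (N : Subgroup π)

def relCommutator : Subgroup N := (⁅(⊤ : Subgroup π), N⁆).subgroupOf N

noncomputable def relClass (m : N) : Additive (N ⧸ relCommutator N) :=
  Additive.ofMul (m : N ⧸ relCommutator N)

variable {N}

lemma relClass_conj (g : π) (m : N) (h : g * m * g⁻¹ ∈ N) :
    relClass N ⟨g * m * g⁻¹, h⟩ = relClass N m := by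
  rw [relClass, relClass, Additive.ofMul.apply_eq_iff_eq, QuotientGroup.eq, relCommutator,
    Subgroup.mem_subgroupOf]
  have hconj : (((⟨g * m * g⁻¹, h⟩ : N)⁻¹ * m : N) : π) = ⁅g, (m : π)⁻¹⁆ := by
    push_cast
    group
  rw [hconj]
  exact Subgroup.commutator_mem_commutator (Subgroup.mem_top _) (N.inv_mem m.2)

variable [N.Normal]

instance : (relCommutator N).Normal := Subgroup.normal_subgroupOf

instance : CommGroup (N ⧸ relCommutator N) where
  mul_comm a b := by
    induction a using QuotientGroup.induction_on with | H x => ?_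
    induction b using QuotientGroup.induction_on with | H y => ?_
    rw [← QuotientGroup.mk_mul, ← QuotientGroup.mk_mul, QuotientGroup.eq, relCommutator,
      Subgroup.mem_subgroupOf]
    have hxy : (((x * y)⁻¹ * (y * x) : N) : π) = ⁅(y : π)⁻¹, (x : π)⁻¹⁆ := by
      push_cast
      group
    rw [hxy]
    exact Subgroup.commutator_mem_commutator (Subgroup.mem_top _) (N.inv_mem x.2)

lemma relClass_mul (m m' : N) : relClass N (m * m') = relClass N m + relClass N m' := rfl

lemma relClass_eq_zero_iff (m : N) : relClass N m = 0 ↔ (m : π) ∈ ⁅(⊤ : Subgroup π), N⁆ := by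
  rw [relClass, ← ofMul_one, Additive.ofMul.apply_eq_iff_eq, QuotientGroup.eq_one_iff,
    relCommutator, Subgroup.mem_subgroupOf]

variable (N)

noncomputable def sectionOffset (g : π) : N :=
  ⟨g * (g : π ⧸ N).out⁻¹, by rw [← QuotientGroup.eq_one_iff]; simp⟩

noncomputable def factorSet (a b : π ⧸ N) : N :=
  ⟨a.out * b.out * (a * b).out⁻¹, by rw [← QuotientGroup.eq_one_iff]; simp⟩

lemma relClass_sectionOffset_mul (g h : π) :
    relClass N (sectionOffset N (g * h)) = relClass N (sectionOffset N g)
      + relClass N (sectionOffset N h) + relClass N (factorSet N g h) := by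
  have hconj : (g : π ⧸ N).out * sectionOffset N h * (g : π ⧸ N).out⁻¹ ∈ N :=
    ‹N.Normal›.conj_mem _ (sectionOffset N h).2 _
  have hsplit : sectionOffset N (g * h) =
      sectionOffset N g * ⟨_, hconj⟩ * factorSet N g h := by
    apply Subtype.ext
    push_cast [sectionOffset, factorSet]
    rw [QuotientGroup.mk_mul]
    group
  rw [hsplit, relClass_mul, relClass_mul, relClass_conj]

noncomputable def offsetCochain :
    ((Fin 1 → π) →₀ ℤ) →ₗ[ℤ] Additive (N ⧸ relCommutator N) :=
  Finsupp.lift _ ℤ _ fun p => relClass N (sectionOffset N (p 0))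

noncomputable def factorCochain :
    ((Fin 2 → π ⧸ N) →₀ ℤ) →ₗ[ℤ] Additive (N ⧸ relCommutator N) :=
  Finsupp.lift _ ℤ _ fun p => relClass N (factorSet N (p 0) (p 1))

lemma offsetCochain_single (p : Fin 1 → π) (b : ℤ) :
    offsetCochain N (Finsupp.single p b) = b • relClass N (sectionOffset N (p 0)) := by
  simp [offsetCochain]

lemma factorCochain_single (p : Fin 2 → π ⧸ N) (b : ℤ) :
    factorCochain N (Finsupp.single p b) = b • relClass N (factorSet N (p 0) (p 1)) := by
  simp [factorCochain]

lemma offsetCochain_comp_barD2 :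
    (offsetCochain N).comp (barD2 π) = -(factorCochain N).comp (barMap (mk' N) 2) := by
  refine Finsupp.lhom_ext fun p b => ?_
  rw [LinearMap.comp_apply, LinearMap.neg_apply, LinearMap.comp_apply, barD2_single,
    barMap_single, map_smul, factorCochain_single]
  simp only [map_add, map_sub, offsetCochain_single, one_smul, Matrix.cons_val_zero,
    Function.comp_apply, mk'_apply, relClass_sectionOffset_mul, smul_add, smul_sub]
  abel

lemma offsetCochain_barD2 (x : (Fin 2 → π) →₀ ℤ) :
    offsetCochain N (barD2 π x) = -factorCochain N (barMap (mk' N) 2 x) :=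
  LinearMap.congr_fun (offsetCochain_comp_barD2 N) x

lemma factorCochain_barMap_of_mem_ker {w : (Fin 2 → π) →₀ ℤ}
    (hw : w ∈ LinearMap.ker (barD2 π)) :
    factorCochain N (barMap (mk' N) 2 w) = 0 := by
  rw [← neg_eq_zero, ← offsetCochain_barD2, LinearMap.mem_ker.mp hw, map_zero]

lemma factorCochain_barD3 (u : (Fin 3 → π ⧸ N) →₀ ℤ) :
    factorCochain N (barD3 (π ⧸ N) u) = 0 := by
  obtain ⟨u, rfl⟩ := barMap_surjective (mk'_surjective N) 3 u
  rw [barD3_barMap]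
  exact factorCochain_barMap_of_mem_ker N (barD2_barD3 u)

lemma factorCochain_eq_zero_of_mem_ker (h2 : Function.Surjective (H2Map (mk' N)))
    {z : (Fin 2 → π ⧸ N) →₀ ℤ} (hz : z ∈ LinearMap.ker (barD2 (π ⧸ N))) :
    factorCochain N z = 0 := by
  obtain ⟨w, hw⟩ := h2 (Submodule.Quotient.mk ⟨z, hz⟩)
  obtain ⟨w, rfl⟩ := Submodule.Quotient.mk_surjective _ w
  obtain ⟨u, hu⟩ := exists_barD3_eq_sub_of_H2Map_mk_eq hw
  have hz : z = barMap (mk' N) 2 w - barD3 (π ⧸ N) u := by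
    rw [hu, sub_sub_cancel]
  rw [hz, map_sub, factorCochain_barMap_of_mem_ker N w.2, factorCochain_barD3, sub_zero]

/-- The section is `Quotient.out`, so `s(1)` need not be `1`: the corrections `s(1)⁻¹` in
`ν[n]` and `F(1, 1) = s(1)` cancel. -/
lemma relClass_eq_offsetCochain_add_factorCochain {n : π} (hn : n ∈ N) :
    relClass N ⟨n, hn⟩ = offsetCochain N (Finsupp.single ![n] 1)
      + factorCochain N (Finsupp.single ![1, 1] 1) := by
  rw [offsetCochain_single, factorCochain_single, one_smul, one_smul, ← relClass_mul]
  congr 1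
  ext
  simp [sectionOffset, factorSet, (QuotientGroup.eq_one_iff n).mpr hn]

end RelCommutator

/-- If the quotient map `π → π/N` induces an injection on
abelianizations and a surjection `H₂(π; ℤ) → H₂(π/N; ℤ)` on second group homology
(trivial `ℤ`-coefficients), then `N` is relatively perfect in `π`: `⁅π, N⁆ = N`. -/
theorem relatively_perfect_of_H1_injective_H2_surjective
    (π : Type*) [Group π] (N : Subgroup π) [N.Normal]
    (h1 : Function.Injective (Abelianization.map (QuotientGroup.mk' N)))
    (h2 : Function.Surjective (H2Map (QuotientGroup.mk' N))) :
    ⁅(⊤ : Subgroup π), N⁆ = N := by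
  open RelCommutator in
  refine le_antisymm (Subgroup.commutator_le_right ⊤ N) fun n hn => ?_
  obtain ⟨c, hc⟩ := single_mem_range_barD2_of_mem_commutator
    (N.le_commutator_of_injective_abelianizationMap h1 hn)
  have hcycle : barMap (QuotientGroup.mk' N) 2 c - Finsupp.single ![1, 1] 1
      ∈ LinearMap.ker (barD2 (π ⧸ N)) := by
    rw [LinearMap.mem_ker, map_sub, barD2_barMap, hc, barMap_single, comp_vec1,
      QuotientGroup.mk'_apply, (QuotientGroup.eq_one_iff n).mpr hn, barD2_single]
    simp
  rw [← relClass_eq_zero_iff ⟨n, hn⟩]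
  calc relClass N ⟨n, hn⟩
      = offsetCochain N (barD2 π c) + factorCochain N (Finsupp.single ![1, 1] 1) := by
        rw [relClass_eq_offsetCochain_add_factorCochain, hc]
    _ = -factorCochain N (barMap (QuotientGroup.mk' N) 2 c - Finsupp.single ![1, 1] 1) := by
        rw [offsetCochain_barD2, map_sub]
        abel
    _ = 0 := by rw [factorCochain_eq_zero_of_mem_ker N h2 hcycle, neg_zero]
end

section
/- For every group G and every prime p, the group algebra (ℤ/pℤ)[G] (the monoid algebra of G over ℤ/pℤ) is G-dense with respect to the canonical monoid homomorphism σ : G → (ℤ/pℤ)[G] sending g to the corresponding group element of the group algebra. -/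
/-- A unital ring `R` together with a monoid homomorphism `σ` from a group `G` to the
multiplicative monoid of `R` is *`G`-dense* if for every free right `R`-module `F`
(a module over `Rᵐᵒᵖ` that is free) and every additive subgroup `T` of `F` that is
stable under right scalar multiplication by every `σ g` and that generates `F` as a
right `R`-module, there is an `R`-basis of `F` contained in `T`. -/
def IsGDense (G : Type*) [Group G] (R : Type*) [Ring R] (σ : G →* R) : Prop :=
  ∀ (F : Type) [AddCommGroup F] [Module Rᵐᵒᵖ F] [Module.Free Rᵐᵒᵖ F]
    (T : AddSubgroup F),
    (∀ (g : G) (x : F), x ∈ T → (MulOpposite.op (σ g)) • x ∈ T) →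
    Submodule.span Rᵐᵒᵖ (T : Set F) = ⊤ →
    ∃ (ι : Type) (b : Module.Basis ι Rᵐᵒᵖ F), ∀ i, b i ∈ T

/-!
Every element of `(ℤ/pℤ)[G]` is an integer combination of group elements, so an additive
subgroup `T` of a right module that is stable under right multiplication by `G` is stable
under all of `(ℤ/pℤ)[G]`, i.e. it is a submodule. Since `T` generates the free module, it is
the whole module, and any basis lies in it.
-/

theorem IsGDense.of_addSubgroupClosure_range_eq_top {G : Type*} [Group G] {R : Type*} [Ring R]
    (σ : G →* R) (hσ : AddSubgroup.closure (Set.range σ) = ⊤) : IsGDense G R σ := by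
  intro F _ _ _ T hT hspan
  let stabilizer : AddSubgroup R :=
    { carrier := {r | ∀ x ∈ T, MulOpposite.op r • x ∈ T}
      add_mem' := fun ha hb x hx => by
        simpa only [MulOpposite.op_add, add_smul] using T.add_mem (ha x hx) (hb x hx)
      zero_mem' := fun x _ => by simpa only [MulOpposite.op_zero, zero_smul] using T.zero_mem
      neg_mem' := fun ha x hx => by
        simpa only [MulOpposite.op_neg, neg_smul] using T.neg_mem (ha x hx) }
  have h_stable : ∀ r : R, r ∈ stabilizer := fun r => by
    have hle : AddSubgroup.closure (Set.range σ) ≤ stabilizer :=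
      AddSubgroup.closure_le _ |>.mpr (Set.range_subset_iff.mpr hT)
    exact hle (hσ ▸ AddSubgroup.mem_top r)
  let S : Submodule Rᵐᵒᵖ F :=
    { T.toAddSubmonoid with smul_mem' := fun c x hx => h_stable c.unop x hx }
  have hS : S = ⊤ := (Submodule.span_eq S).symm.trans hspan
  exact ⟨_, Module.Free.chooseBasis Rᵐᵒᵖ F, fun i => (hS ▸ Submodule.mem_top : _ ∈ S)⟩

theorem MonoidAlgebra.addSubgroupClosure_range_of_eq_top_of_intCast_surjective {k : Type*}
    [Ring k] (G : Type*) [Monoid G] (hk : Function.Surjective (Int.cast : ℤ → k)) :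
    AddSubgroup.closure (Set.range (MonoidAlgebra.of k G)) = ⊤ := by
  refine (AddSubgroup.eq_top_iff' _).mpr fun f => ?_
  induction f using MonoidAlgebra.induction_on with
  | of g => exact AddSubgroup.subset_closure (Set.mem_range_self g)
  | add f f' hf hf' => exact AddSubgroup.add_mem _ hf hf'
  | smul c f hf =>
    obtain ⟨m, rfl⟩ := hk c
    rw [Int.cast_smul_eq_zsmul]
    exact AddSubgroup.zsmul_mem _ hf m

theorem monoidAlgebra_zmod_isGDense_general (G : Type*) [Group G] (p : ℕ) :
    IsGDense G (MonoidAlgebra (ZMod p) G) (MonoidAlgebra.of (ZMod p) G) :=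
  IsGDense.of_addSubgroupClosure_range_eq_top _
    (MonoidAlgebra.addSubgroupClosure_range_of_eq_top_of_intCast_surjective G
      ZMod.intCast_surjective)

/-- For every group `G` and prime `p`, the group algebra `(ℤ/pℤ)[G]`
is `G`-dense with respect to the canonical map `g ↦ g`. -/
theorem monoidAlgebra_zmod_isGDense (G : Type*) [Group G] (p : ℕ) [Fact p.Prime] :
    IsGDense G (MonoidAlgebra (ZMod p) G) (MonoidAlgebra.of (ZMod p) G) :=
  monoidAlgebra_zmod_isGDense_general G p
end

section
/- For every group G and every subring k of the rational numbers ℚ, the ring k is G-dense with respect to the trivial monoid homomorphism σ : G → k sending every g to 1. (In particular, ℤ is G-dense for every group G.) -/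
theorem Subring.isUnit_den_cast (k : Subring ℚ) (r : k) : IsUnit (((r : ℚ).den : ℤ) : k) := by
  have hnum : (((r : ℚ).num : ℤ) : k) = r * (((r : ℚ).den : ℤ) : k) := by
    ext
    push_cast
    exact (Rat.mul_den_eq_num (r : ℚ)).symm
  exact ((Rat.isCoprime_num_den (r : ℚ)).map (Int.castRingHom k)).isUnit_of_dvd'
    ⟨r, by rw [eq_intCast, hnum, mul_comm]⟩ dvd_rfl

theorem Subring.exists_isUnit_intCast_mul_eq_intCast (k : Subring ℚ) (r : k) :
    ∃ d : ℤ, IsUnit (d : k) ∧ ∃ m : ℤ, r * d = m :=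
  ⟨(r : ℚ).den, k.isUnit_den_cast r, (r : ℚ).num, by ext; push_cast; exact Rat.mul_den_eq_num _⟩

theorem MulOpposite.op_intCast_smul {R M : Type*} [Ring R] [AddCommGroup M] [Module Rᵐᵒᵖ M]
    (n : ℤ) (x : M) : MulOpposite.op (n : R) • x = n • x := by
  rw [MulOpposite.op_intCast, Int.cast_smul_eq_zsmul]

theorem exists_isUnit_intCast_zsmul_mem_of_mem_span {R M : Type*} [Ring R] [AddCommGroup M]
    [Module Rᵐᵒᵖ M] (hR : ∀ r : R, ∃ d : ℤ, IsUnit (d : R) ∧ ∃ m : ℤ, r * d = m)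
    (T : AddSubgroup M) {x : M} (hx : x ∈ Submodule.span Rᵐᵒᵖ (T : Set M)) :
    ∃ n : ℤ, IsUnit (n : R) ∧ n • x ∈ T := by
  induction hx using Submodule.span_induction with
  | mem x hx => exact ⟨1, by simp, by simpa using hx⟩
  | zero => exact ⟨1, by simp, by simp⟩
  | add x y _ _ hx hy =>
    obtain ⟨n, hn, hnx⟩ := hx
    obtain ⟨m, hm, hmy⟩ := hy
    refine ⟨m * n, by push_cast; exact hm.mul hn, ?_⟩
    rw [smul_add, mul_smul, mul_comm, mul_smul]
    exact T.add_mem (T.zsmul_mem hnx m) (T.zsmul_mem hmy n)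
  | smul a x _ hx =>
    obtain ⟨n, hn, hnx⟩ := hx
    obtain ⟨d, hd, m, hm⟩ := hR a.unop
    refine ⟨d * n, by push_cast; exact hd.mul hn, ?_⟩
    have hclear : MulOpposite.op (d : R) * a = MulOpposite.op (m : R) := by
      rw [← MulOpposite.op_unop a, ← MulOpposite.op_mul, hm]
    rw [mul_comm, mul_smul, ← MulOpposite.op_intCast_smul (R := R) d, smul_smul, hclear,
      MulOpposite.op_intCast_smul, smul_comm]
    exact T.zsmul_mem hnx m

universe v

theorem Module.Free.exists_basis_forall_mem {A : Type*} {M : Type v} [Ring A] [AddCommGroup M]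
    [Module A M] [Module.Free A M] (T : Set M) (hT : ∀ x : M, ∃ u : Aˣ, u • x ∈ T) :
    ∃ (ι : Type v) (b : Module.Basis ι A M), ∀ i, b i ∈ T := by
  obtain ⟨ι, b⟩ := Module.Free.exists_basis (R := A) (M := M)
  choose u hu using fun i => hT (b i)
  exact ⟨ι, b.unitsSMul u, fun i => by rw [Module.Basis.unitsSMul_apply]; exact hu i⟩

/-- For every group `G` and every subring `k ⊆ ℚ`, the ring `k` is
`G`-dense with respect to the trivial homomorphism sending every `g` to `1`. -/
theorem subringRat_isGDense (G : Type*) [Group G] (k : Subring ℚ) :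
    IsGDense G k 1 := by
  intro F _ _ _ T _ hspan
  refine Module.Free.exists_basis_forall_mem (T : Set F) fun x => ?_
  obtain ⟨n, hn, hnx⟩ := exists_isUnit_intCast_zsmul_mem_of_mem_span
    k.exists_isUnit_intCast_mul_eq_intCast T (hspan ▸ Submodule.mem_top : x ∈ _)
  refine ⟨hn.op.unit, ?_⟩
  rwa [Units.smul_def, IsUnit.unit_spec, MulOpposite.op_intCast_smul]
end

section
/- Let R be a unital ring that is right Steinitz, i.e., every linearly independent subset of every free right R-module can be extended to a basis of that module. Then for every group G and every monoid homomorphism σ : G → R into the multiplicative monoid of R, the ring R is G-dense with respect to σ. -/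
/-- A unital ring `R` is *right Steinitz* if every linearly independent subset of any
free right `R`-module extends to a basis of that module. -/
def IsRightSteinitz (R : Type*) [Ring R] : Prop :=
  ∀ (F : Type) [AddCommGroup F] [Module Rᵐᵒᵖ F] [Module.Free Rᵐᵒᵖ F]
    (s : Set F), LinearIndependent Rᵐᵒᵖ ((↑) : s → F) →
    ∃ (ι : Type) (b : Module.Basis ι Rᵐᵒᵖ F), s ⊆ Set.range b

/-!
A right Steinitz ring is local, and over a local ring a maximal linearly independent subset of a
generating set, once extended to a basis, is that whole basis: a basis vector `bᵢ` outside it is a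
combination of generators, so (nonunits forming a left ideal) some generator has a unit `i`-th
coordinate, and such a generator can be added to the independent set.

Locality of `S = Rᵐᵒᵖ`: extend the independent family `eₙ - a eₙ₊₁` of `S^(ℕ)` to a basis. If it
spans, `a` is nilpotent; otherwise the coordinate `f` of a basis vector outside it satisfies
`f eₙ = a f eₙ₊₁` and `1 ∈ ⋃ₙ S f eₙ`, so `c a d = 1`. That `a` is then a unit needs Dedekind
finiteness, which comes from extending `{v}` (where `v r = 1`) to a basis of `S`: a second basis
vector `z` would produce the infinite independent family `z (1 - r v) vⁿ` in the cyclic module `S`,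
whose bases are finite.
-/

open Module Submodule Set

def IsLeftSteinitz (S : Type*) [Ring S] : Prop :=
  ∀ (F : Type) [AddCommGroup F] [Module S F] [Module.Free S F]
    (s : Set F), LinearIndependent S ((↑) : s → F) →
    ∃ (ι : Type) (b : Basis ι S F), s ⊆ range b

theorem linearIndependent_mul_one_sub_mul_pow {S : Type*} [Ring S] {v r a z : S} (hvr : v * r = 1)
    (hva : v * a = 0) (hza : z * a = 1) :
    LinearIndependent S (fun n : ℕ => z * (1 - r * v) * v ^ n) := by
  have hpow (n : ℕ) : v ^ n * r ^ n = 1 := pow_mul_pow_eq_one n hvr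
  refine .of_pairwise_dual_eq_zero_one _ (fun m => LinearMap.toSpanSingleton S S (r ^ m * a))
    (fun m n hmn => ?_) (fun n => ?_)
  all_goals simp only [LinearMap.toSpanSingleton_apply, smul_eq_mul]
  · rcases lt_or_gt_of_ne hmn with hlt | hlt
    · obtain ⟨k, rfl⟩ := Nat.exists_eq_add_of_lt hlt
      have : v ^ (m + k + 1) * (r ^ m * a) = v ^ k * (v * a) := by
        rw [show m + k + 1 = k + 1 + m by omega, pow_add, mul_assoc, ← mul_assoc (v ^ m), hpow,
          one_mul, pow_succ, mul_assoc]
      rw [mul_assoc, this, hva, mul_zero, mul_zero]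
    · obtain ⟨k, rfl⟩ := Nat.exists_eq_add_of_lt hlt
      have : (1 - r * v) * r ^ (k + 1) = 0 := by
        rw [pow_succ', sub_mul, one_mul, mul_assoc, ← mul_assoc v, hvr, one_mul, sub_self]
      rw [Nat.add_assoc, pow_add, mul_assoc, ← mul_assoc (v ^ n), ← mul_assoc (v ^ n), hpow,
        one_mul, mul_assoc z, ← mul_assoc (1 - r * v), this, zero_mul, mul_zero]
  · rw [mul_assoc, ← mul_assoc (v ^ n), hpow, one_mul, mul_assoc, sub_mul, one_mul, mul_assoc r,
      hva, mul_zero, sub_zero, hza]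

section Telescope

variable {S : Type*} [Ring S] (a : S)

/-- The relations `eₙ - a • eₙ₊₁` presenting the direct limit of `S →(· * a) S →(· * a) ⋯`. -/
noncomputable def telescope (n : ℕ) : ℕ →₀ S := Finsupp.single n 1 - Finsupp.single (n + 1) a

theorem linearCombination_telescope_apply_zero (g : ℕ →₀ S) :
    Finsupp.linearCombination S (telescope a) g 0 = g 0 := by
  induction g using Finsupp.induction_linear with
  | zero => simp
  | add f g hf hg => simp [hf, hg]
  | single n c => cases n <;> simp [telescope]

theorem linearCombination_telescope_apply_succ (g : ℕ →₀ S) (j : ℕ) :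
    Finsupp.linearCombination S (telescope a) g (j + 1) = g (j + 1) - g j * a := by
  induction g using Finsupp.induction_linear with
  | zero => simp
  | add f g hf hg =>
    simp only [map_add, Finsupp.coe_add, Pi.add_apply, hf, hg, add_mul]
    abel
  | single n c => by_cases hn : n = j <;> simp [telescope, Finsupp.single_apply, hn]

variable {a} in
theorem eq_mul_pow_of_linearCombination_telescope_eq_single {g : ℕ →₀ S} {y : S}
    (hg : Finsupp.linearCombination S (telescope a) g = Finsupp.single 0 y) (j : ℕ) :
    g j = y * a ^ j := by
  induction j with
  | zero => simpa [hg] using (linearCombination_telescope_apply_zero a g).symm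
  | succ j ih =>
    have := linearCombination_telescope_apply_succ a g j
    rw [hg, Finsupp.single_eq_of_ne (by omega), ih, eq_comm, sub_eq_zero] at this
    rw [this, pow_succ, mul_assoc]

theorem linearIndependent_telescope : LinearIndependent S (telescope a) :=
  linearIndependent_iff.2 fun g hg => Finsupp.ext fun j => by
    simpa using eq_mul_pow_of_linearCombination_telescope_eq_single
      (hg.trans (Finsupp.single_zero 0).symm) j

end Telescope

namespace IsLeftSteinitz

variable {S : Type*} [Ring S] (h : IsLeftSteinitz S)
include h

theorem exists_basis_superset {V : Type*} [AddCommGroup V] [Module S V] [Module.Free S V]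
    [Small.{0} V] {s : Set V} (hs : LinearIndepOn S id s) :
    ∃ (ι : Type) (b : Basis ι S V), s ⊆ range b := by
  let e : Shrink.{0} V ≃ₗ[S] V := Shrink.linearEquiv S V
  have : Module.Free S (Shrink.{0} V) := .of_equiv e.symm
  obtain ⟨ι, b, hb⟩ := h _ _ (hs.id_imageₛ (f := e.symm.toLinearMap) e.symm.injective.injOn)
  refine ⟨ι, b.map e, fun y hy => ?_⟩
  obtain ⟨i, hi⟩ := hb (mem_image_of_mem e.symm hy)
  exact ⟨i, by simp [hi]⟩

theorem finite_of_linearIndependent [Nontrivial S] {V : Type*} [AddCommGroup V] [Module S V]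
    [Module.Free S V] [Module.Finite S V] [Small.{0} V] {ι : Type*} {y : ι → V}
    (hy : LinearIndependent S y) : Finite ι := by
  obtain ⟨κ, b, hb⟩ := h.exists_basis_superset hy.linearIndepOn_id
  have := Module.Finite.finite_basis b
  exact (Set.finite_range_iff hy.injective).1 ((finite_range b).subset hb)

theorem isDedekindFiniteMonoid [Small.{0} S] : IsDedekindFiniteMonoid S := by
  refine ⟨fun {v r} hvr => ?_⟩
  nontriviality S
  have hv : LinearIndepOn S id {v} := .singleton' fun c hc => by
    simpa [mul_assoc, hvr] using congrArg (· * r) hc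
  obtain ⟨ι, b, hb⟩ := h.exists_basis_superset hv
  obtain ⟨i, hi⟩ := hb rfl
  by_cases hsingle : ∀ j, j = i
  · have : (1 : S) ∈ span S {v} := by
      refine span_mono ?_ (b.span_eq ▸ mem_top : (1 : S) ∈ span S (range b))
      rintro _ ⟨j, rfl⟩
      rw [hsingle j, hi, mem_singleton_iff]
    obtain ⟨c, hc⟩ := mem_span_singleton.1 this
    rw [smul_eq_mul] at hc
    calc r * v = c * v * r * v := by rw [hc, one_mul]
      _ = 1 := by rw [mul_assoc c, hvr, mul_one, hc]
  · obtain ⟨j, hj⟩ := not_forall.1 hsingle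
    have hcoord (w : S) : b.coord j w = w * b.coord j 1 := by
      simpa using (b.coord j).map_smul w 1
    have hva : v * b.coord j 1 = 0 := by
      rw [← hcoord, ← hi, Basis.coord_apply, Basis.repr_self, Finsupp.single_eq_of_ne hj]
    have hza : b j * b.coord j 1 = 1 := by rw [← hcoord]; simp
    have := h.finite_of_linearIndependent (linearIndependent_mul_one_sub_mul_pow hvr hva hza)
    exact (not_finite ℕ).elim

theorem isNilpotent_or_isUnit [Small.{0} S] [IsDedekindFiniteMonoid S] (a : S) :
    IsNilpotent a ∨ IsUnit a := by
  obtain ⟨ι, b, hb⟩ := h.exists_basis_superset (linearIndependent_telescope a).linearIndepOn_id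
  by_cases hall : ∀ i, b i ∈ range (telescope a)
  · have hspan : span S (range (telescope a)) = ⊤ :=
      eq_top_iff.2 (b.span_eq ▸ span_mono (range_subset_iff.2 hall))
    obtain ⟨g, hg⟩ := Finsupp.mem_span_range_iff_exists_finsupp.1
      (hspan ▸ mem_top : Finsupp.single 0 (1 : S) ∈ _)
    obtain ⟨j, hj⟩ := Infinite.exists_notMem_finset g.support
    refine .inl ⟨j, ?_⟩
    rw [← one_mul (a ^ j), ← eq_mul_pow_of_linearCombination_telescope_eq_single hg j]
    exact Finsupp.notMem_support_iff.1 hj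
  · obtain ⟨j, hj⟩ := not_forall.1 hall
    set d : ℕ → S := fun n => b.coord j (Finsupp.single n 1)
    have hd (n : ℕ) : d n = a * d (n + 1) := by
      obtain ⟨i, hi⟩ := hb (mem_range_self n)
      have hij : i ≠ j := by rintro rfl; exact hj ⟨n, hi.symm⟩
      have : b.coord j (telescope a n) = 0 := by
        rw [← hi, Basis.coord_apply, Basis.repr_self, Finsupp.single_eq_of_ne hij.symm]
      rwa [telescope, ← Finsupp.smul_single_one (n + 1) a, map_sub, map_smul, smul_eq_mul,
        sub_eq_zero] at this
    have hmono : Monotone fun n => span S {d n} := monotone_nat_of_le_succ fun n =>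
      (span_singleton_le_iff_mem _ _).2 (mem_span_singleton.2 ⟨a, (hd n).symm⟩)
    have hone : (1 : S) ∈ span S (range d) := by
      have : b j ∈ span S (range fun n : ℕ => Finsupp.single n (1 : S)) := by
        rw [← Finsupp.coe_basisSingleOne, Finsupp.basisSingleOne.span_eq]; trivial
      convert mem_map_of_mem (f := b.coord j) this using 1
      · rw [map_span, ← range_comp]; rfl
      · simp
    rw [span_range_eq_iSup, mem_iSup_of_directed _ hmono.directed_le] at hone
    obtain ⟨N, hN⟩ := hone
    obtain ⟨c, hc⟩ := mem_span_singleton.1 hN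
    rw [smul_eq_mul, hd] at hc
    exact .inr (.of_mul_eq_one (d (N + 1) * c) (by rw [← mul_assoc]; exact mul_eq_one_symm hc))

theorem isLocalRing [Nontrivial S] [Small.{0} S] : IsLocalRing S :=
  have := h.isDedekindFiniteMonoid
  .of_isUnit_or_isUnit_one_sub_self fun a =>
    (h.isNilpotent_or_isUnit a).symm.imp_right IsNilpotent.isUnit_one_sub

end IsLeftSteinitz

section Basis

variable {S V ι : Type*} [Ring S] [AddCommGroup V] [Module S V]

theorem exists_maximal_linearIndepOn_subset (T : Set V) :
    ∃ s, Maximal (fun u => u ⊆ T ∧ LinearIndepOn S id u) s :=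
  zorn_subset _ fun c hc hchain => ⟨⋃₀ c, ⟨sUnion_subset fun _ hu => (hc hu).1,
    linearIndepOn_sUnion_of_directed hchain.directedOn fun _ hu => (hc hu).2⟩,
    fun _ hu => subset_sUnion_of_mem hu⟩

theorem linearIndepOn_insert_of_isUnit_repr (b : Basis ι S V) {s : Set V} {t : V} {i : ι}
    (hs : LinearIndepOn S id s) (hsb : s ⊆ range b) (hi : b i ∉ s) (ht : IsUnit (b.repr t i)) :
    LinearIndepOn S id (insert t s) := by
  refine hs.id_insert' fun r hr => ?_
  have hker : span S s ≤ LinearMap.ker (b.coord i) := span_le.2 fun y hy => by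
    obtain ⟨j, rfl⟩ := hsb hy
    have : j ≠ i := by rintro rfl; exact hi hy
    simp [Finsupp.single_eq_of_ne this.symm]
  simpa [ht.mul_left_eq_zero] using hker hr

variable [IsLocalRing S] [IsDedekindFiniteMonoid S]

theorem exists_isUnit_repr_of_span_eq_top (b : Basis ι S V) {T : Set V} (hT : span S T = ⊤)
    (i : ι) : ∃ t ∈ T, IsUnit (b.repr t i) := by
  obtain ⟨n, c, g, hsum⟩ := mem_span_set'.1 (hT ▸ mem_top : b i ∈ span S T)
  have hone : ∑ k, c k * b.repr (g k) i = 1 := by simpa using congrArg (b.repr · i) hsum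
  obtain ⟨k, -, hk⟩ := IsLocalRing.exists_of_isUnit_sum (hone ▸ isUnit_one)
  exact ⟨g k, (g k).2, isUnit_of_mul_isUnit_right hk⟩

theorem mem_of_maximal_linearIndepOn (b : Basis ι S V) {T s : Set V} (hT : span S T = ⊤)
    (hs : Maximal (fun u => u ⊆ T ∧ LinearIndepOn S id u) s) (hsb : s ⊆ range b) (i : ι) :
    b i ∈ s := by
  by_contra hi
  obtain ⟨t, htT, ht⟩ := exists_isUnit_repr_of_span_eq_top b hT i
  have hts : t ∈ s := hs.mem_of_prop_insert
    ⟨insert_subset htT hs.prop.1, linearIndepOn_insert_of_isUnit_repr b hs.prop.2 hsb hi ht⟩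
  obtain ⟨j, rfl⟩ := hsb hts
  have : j ≠ i := by rintro rfl; exact hi hts
  simp [Finsupp.single_eq_of_ne this.symm] at ht

end Basis

/-- A right Steinitz ring `R` is `G`-dense with respect to every
monoid homomorphism `σ : G → R`. -/
theorem isGDense_of_isRightSteinitz (R : Type*) [Ring R] (hR : IsRightSteinitz R)
    (G : Type*) [Group G] (σ : G →* R) :
    IsGDense G R σ := by
  intro F _ _ _ T _ hspan
  obtain ⟨s, hs⟩ := exists_maximal_linearIndepOn_subset (S := Rᵐᵒᵖ) (T : Set F)
  obtain ⟨ι, b, hsb⟩ := hR F s hs.prop.2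
  refine ⟨ι, b, fun i => ?_⟩
  rcases subsingleton_or_nontrivial Rᵐᵒᵖ with _ | _
  · have := Module.subsingleton Rᵐᵒᵖ F
    exact Subsingleton.elim 0 (b i) ▸ T.zero_mem
  have hSt : IsLeftSteinitz Rᵐᵒᵖ := hR
  have : Small.{0} Rᵐᵒᵖ := small_of_injective (b.linearIndependent.smul_left_injective i)
  have := hSt.isLocalRing
  have := hSt.isDedekindFiniteMonoid
  exact hs.prop.1 (mem_of_maximal_linearIndepOn b hspan hs hsb i)
end

section
/- The ring ℤ[i] of Gaussian integers is not G-dense for the trivial group G: explicitly, taking σ to be the trivial monoid homomorphism from the one-element group to ℤ[i], there exist a free right ℤ[i]-module F and an additive subgroup T of F generating F as an ℤ[i]-module such that no ℤ[i]-basis of F is contained in T. (One may take F = ℤ[i] itself and T = {3a + (2+i)b : a, b ∈ ℤ}.) -/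
/-!
Over a commutative ring `R`, a basis of `R` as a module over itself consists of units, so
`G`-density forces every generating (`σ`-stable) additive subgroup of `R` to contain a unit. In
`ℤ[i]` the subgroup `ℤ·3 + ℤ·(2 + i)` generates the unit ideal, since
`1 = 2·3 - (2 - i)(2 + i)`, but the norm `(3a + 2c)² + c²` of its element `3a + c(2 + i)` is
`≡ 2c² (mod 3)`, hence never `1`.
-/

open MulOpposite

theorem Module.Basis.isUnit_apply_self {R ι : Type*} [CommSemiring R] (b : Module.Basis ι R R)
    (i : ι) : IsUnit (b i) :=
  .of_mul_eq_one (b.repr 1 i) <| by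
    simpa using (congrArg (· i) (b.repr.map_smul (b i) 1)).symm

theorem IsGDense.exists_isUnit_mem {G : Type*} {R : Type} [Group G] [CommRing R] [Nontrivial R]
    {σ : G →* R} (h : IsGDense G R σ) (T : AddSubgroup R) (hT : ∀ g, ∀ t ∈ T, t * σ g ∈ T)
    (hspan : Ideal.span (T : Set R) = ⊤) : ∃ t ∈ T, IsUnit t := by
  have hspan_op : Submodule.span Rᵐᵒᵖ (op '' (T : Set R)) = ⊤ := by
    have := congrArg (Ideal.map (RingEquiv.toOpposite R)) hspan
    rwa [Ideal.map_span, Ideal.map_top] at this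
  obtain ⟨ι, b, hb⟩ := h Rᵐᵒᵖ (T.map opAddEquiv.toAddMonoidHom)
    (by
      rintro g _ ⟨t, ht, rfl⟩
      exact ⟨t * σ g, hT g t ht, rfl⟩)
    (by simpa using hspan_op)
  have : Nonempty ι := b.index_nonempty
  obtain ⟨t, ht, hbt⟩ := hb (Classical.arbitrary ι)
  have hbt : op t = b (Classical.arbitrary ι) := hbt
  exact ⟨t, ht, isUnit_op.mp (hbt ▸ b.isUnit_apply_self _)⟩

theorem GaussianInt.ideal_span_three_two_add_i :
    Ideal.span {3, ⟨2, 1⟩} = (⊤ : Ideal GaussianInt) :=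
  Ideal.eq_top_of_isUnit_mem _ (Ideal.mem_span_pair.mpr ⟨2, -⟨2, -1⟩, by decide⟩) isUnit_one

theorem GaussianInt.not_isUnit_of_mem_span_three_two_add_i {x : GaussianInt}
    (hx : x ∈ Submodule.span ℤ {3, ⟨2, 1⟩}) : ¬IsUnit x := by
  rw [← Zsqrtd.norm_eq_one_iff' (by norm_num)]
  obtain ⟨a, c, rfl⟩ := Submodule.mem_span_pair.mp hx
  intro h
  have h_int : (3 * a + 2 * c) ^ 2 + c ^ 2 = 1 := by
    rw [← h, Zsqrtd.norm_def]
    simp only [zsmul_eq_mul, Zsqrtd.re_add, Zsqrtd.im_add, Zsqrtd.re_mul, Zsqrtd.im_mul,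
      Zsqrtd.re_intCast, Zsqrtd.im_intCast, Zsqrtd.re_ofNat, Zsqrtd.im_ofNat]
    ring
  have h_mod := congrArg (Int.cast : ℤ → ZMod 3) h_int
  push_cast at h_mod
  generalize (a : ZMod 3) = a at h_mod
  generalize (c : ZMod 3) = c at h_mod
  revert a c h_mod
  decide

/-- The Gaussian integers `ℤ[i]` are not `G`-dense for the trivial
group `G` (with the trivial homomorphism `σ`): there exist a free right `ℤ[i]`-module
`F` and an additive subgroup `T` generating `F` as an `ℤ[i]`-module, stable under the
(vacuous) action, such that no `ℤ[i]`-basis of `F` lies in `T`. -/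
theorem gaussianInt_not_isGDense :
    ¬ IsGDense PUnit GaussianInt 1 := by
  intro h
  let T := (Submodule.span ℤ ({3, ⟨2, 1⟩} : Set GaussianInt)).toAddSubgroup
  have hspan : Ideal.span (T : Set GaussianInt) = ⊤ :=
    top_unique <| GaussianInt.ideal_span_three_two_add_i.ge.trans <|
      Ideal.span_mono Submodule.subset_span
  obtain ⟨x, hx, hunit⟩ := h.exists_isUnit_mem T (by simp) hspan
  exact GaussianInt.not_isUnit_of_mem_span_three_two_add_i hx hunit
end

section
/- Let A be a commutative ring, let C be a chain complex of A-modules indexed by the natural numbers in which every module C_q is free, and let M be an A-module equipped with an injective A-linear map j : A → M whose cokernel M/j(A) is a flat A-module. Then for every natural number n, the following are equivalent: (i) the homology modules H_i(C) vanish for all 0 ≤ i ≤ n; (ii) the homology modules H_i(C ⊗_A M) of the complex obtained by tensoring C degreewise with M over A vanish for all 0 ≤ i ≤ n. -/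
/-!
Since `M` is an extension of the flat module `M/j(A)` by `A`, it is flat, so tensoring with `M`
commutes with homology: `H_i(C ⊗ M) ≅ H_i(C) ⊗ M`. Flatness of `M/j(A)` also makes `j`
universally injective, so `N → N ⊗ M`, `n ↦ n ⊗ j 1` is injective and `N ⊗ M = 0` forces `N = 0`.
-/

open CategoryTheory CategoryTheory.Limits CategoryTheory.MonoidalCategory

section

open TensorProduct LinearMap

theorem Module.Flat.of_shortExact {R N M P : Type*} [CommRing R]
    [AddCommGroup N] [Module R N] [AddCommGroup M] [Module R M] [AddCommGroup P] [Module R P]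
    [Module.Flat R N] [Module.Flat R P] {g : N →ₗ[R] M} {f : M →ₗ[R] P}
    (hg : Function.Injective g) (hf : Function.Surjective f) (H : Function.Exact g f) :
    Module.Flat R M := by
  refine Module.Flat.iff_rTensor_preserves_injective_linearMap.mpr fun X Y _ _ _ _ i hi => ?_
  have comm_g (a : X ⊗[R] N) : i.rTensor M (g.lTensor X a) = g.lTensor Y (i.rTensor N a) := by
    rw [← LinearMap.comp_apply, ← LinearMap.comp_apply, rTensor_comp_lTensor, lTensor_comp_rTensor]
  have comm_f (x : X ⊗[R] M) : i.rTensor P (f.lTensor X x) = f.lTensor Y (i.rTensor M x) := by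
    rw [← LinearMap.comp_apply, ← LinearMap.comp_apply, rTensor_comp_lTensor, lTensor_comp_rTensor]
  -- A four-lemma chase: the rows `X ⊗ N → X ⊗ M → X ⊗ P` are exact with injective first map
  -- because `P` is flat, and the outer columns are injective because `N` and `P` are flat.
  refine (injective_iff_map_eq_zero _).mpr fun x hx => ?_
  have hfx : f.lTensor X x = 0 :=
    Module.Flat.rTensor_preserves_injective_linearMap i hi (by rw [comm_f, hx, map_zero, map_zero])
  obtain ⟨a, rfl⟩ := (_root_.lTensor_exact X H hf x).mp hfx
  have ha : i.rTensor N a = 0 :=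
    lTensor_injective_of_exact_of_flat f hf g hg H Y (by rw [← comm_g, hx, map_zero])
  rw [Module.Flat.rTensor_preserves_injective_linearMap i hi (ha.trans (map_zero _).symm),
    map_zero]

theorem tmul_map_one_injective_of_flat_cokernel {R M : Type*} [CommRing R] [AddCommGroup M]
    [Module R M] {j : R →ₗ[R] M} (hj : Function.Injective j)
    [Module.Flat R (M ⧸ range j)] (N : Type*) [AddCommGroup N] [Module R N] :
    Function.Injective fun n : N => n ⊗ₜ[R] j 1 := by
  have := (lTensor_injective_of_exact_of_flat _ (Submodule.mkQ_surjective _) j hj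
    (exact_map_mkQ_range j) N).comp (TensorProduct.rid R N).symm.injective
  simpa [Function.comp_def] using this

end

theorem isZero_tensorRight_obj_iff {R : Type} [CommRing R] {M : Type} [AddCommGroup M]
    [Module R M] {j : R →ₗ[R] M} (hj : Function.Injective j)
    [Module.Flat R (M ⧸ LinearMap.range j)] (N : ModuleCat R) :
    IsZero ((tensorRight (ModuleCat.of R M)).obj N) ↔ IsZero N := by
  refine ⟨fun h => ?_, (tensorRight _).map_isZero⟩
  have : Subsingleton (TensorProduct R N M) := ModuleCat.isZero_iff_subsingleton.mp h
  exact ModuleCat.isZero_iff_subsingleton.mpr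
    (tmul_map_one_injective_of_flat_cokernel hj N).subsingleton

theorem isZero_homology_mapHomologicalComplex_iff {C D ι : Type*} [Category C] [Category D]
    [Abelian C] [Abelian D] (F : C ⥤ D) [F.Additive] [F.PreservesHomology] {c : ComplexShape ι}
    (K : HomologicalComplex C c) (i : ι) :
    IsZero (((F.mapHomologicalComplex c).obj K).homology i) ↔ IsZero (F.obj (K.homology i)) :=
  Iso.isZero_iff ((K.sc i).mapHomologyIso F)

theorem homology_vanishing_iff_tensor_general
    (A : Type) [CommRing A] (C : ChainComplex (ModuleCat A) ℕ)
    (M : Type) [AddCommGroup M] [Module A M]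
    (j : A →ₗ[A] M) (hj : Function.Injective j)
    (hflat : Module.Flat A (M ⧸ LinearMap.range j)) (n : ℕ) :
    (∀ i ≤ n, IsZero (C.homology i)) ↔
    (∀ i ≤ n, IsZero ((((tensorRight (ModuleCat.of A M)).mapHomologicalComplex
      (ComplexShape.down ℕ)).obj C).homology i)) := by
  have : Module.Flat A M :=
    .of_shortExact hj (Submodule.mkQ_surjective _) (LinearMap.exact_map_mkQ_range j)
  simp only [isZero_homology_mapHomologicalComplex_iff, isZero_tensorRight_obj_iff hj]

/-- Let `A` be a commutative ring, `C` a chain complex of free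
`A`-modules indexed by `ℕ`, and `M` an `A`-module with an injective `A`-linear map
`j : A → M` whose cokernel is flat. Then for every `n`, the homology of `C` vanishes
in degrees `0, …, n` if and only if the homology of `C ⊗_A M` vanishes in degrees
`0, …, n`. -/
theorem homology_vanishing_iff_tensor
    (A : Type) [CommRing A] (C : ChainComplex (ModuleCat A) ℕ)
    (hfree : ∀ q : ℕ, Module.Free A (C.X q))
    (M : Type) [AddCommGroup M] [Module A M]
    (j : A →ₗ[A] M) (hj : Function.Injective j)
    (hflat : Module.Flat A (M ⧸ LinearMap.range j)) (n : ℕ) :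
    (∀ i ≤ n, IsZero (C.homology i)) ↔
    (∀ i ≤ n, IsZero ((((tensorRight (ModuleCat.of A M)).mapHomologicalComplex
      (ComplexShape.down ℕ)).obj C).homology i)) :=
  homology_vanishing_iff_tensor_general A C M j hj hflat n
end
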